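/- Let T and T' be non-obtuse labeled triangles in the Euclidean plane having the same area, and let {i,j,k} = {1,2,3}. If θ_j ≤ θ'_j and θ_k ≤ θ'_k, then M(T,T') = ‖e_i‖/‖e'_i‖; if instead θ_j ≥ θ'_j and θ_k ≥ θ'_k, then M(T,T') = ‖e'_i‖/‖e_i‖. In either case M(T,T') = max(‖e_i‖/‖e'_i‖, ‖e'_i‖/‖e_i‖), i.e. log M(T,T') = |log ‖e'_i‖ − log ‖e_i‖|. -/

import Mathlib

open Metric Set ENNReal

noncomputable section

abbrev E2 := EuclideanSpace ℝ (Fin 2)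

/-- The (filled) triangle with labeled vertices `v 0, v 1, v 2`. -/
def Tri (v : Fin 3 → E2) : Set E2 := convexHull ℝ (Set.range v)

/-- `edgeLen v i` is the length of the edge opposite to vertex `i`. -/
def edgeLen (v : Fin 3 → E2) (i : Fin 3) : ℝ := dist (v (i + 1)) (v (i + 2))

/-- `altLen v i` is the length of the altitude from vertex `i`. -/
def altLen (v : Fin 3 → E2) (i : Fin 3) : ℝ :=
  Metric.infDist (v i) ((affineSpan ℝ ({v (i + 1), v (i + 2)} : Set E2) : Set E2))

/-- `ang v i` is the interior angle at vertex `i`. -/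
def ang (v : Fin 3 → E2) (i : Fin 3) : ℝ :=
  EuclideanGeometry.angle (v (i + 1)) (v i) (v (i + 2))

def IsAcute (v : Fin 3 → E2) : Prop := ∀ i, ang v i < Real.pi / 2

def IsNonObtuse (v : Fin 3 → E2) : Prop := ∀ i, ang v i ≤ Real.pi / 2

def triArea (v : Fin 3 → E2) : ℝ := edgeLen v 0 * altLen v 0 / 2

/-- `f` restricts to a label-preserving homeomorphism from the triangle on `v`
onto the triangle on `v'`. -/
def IsLabelHomeo (v v' : Fin 3 → E2) (f : E2 → E2) : Prop :=
  ContinuousOn f (Tri v) ∧ Set.BijOn f (Tri v) (Tri v') ∧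
  (∃ g : E2 → E2, ContinuousOn g (Tri v') ∧ Set.InvOn g f (Tri v) (Tri v')) ∧
  ∀ i, f (v i) = v' i

/-- The Lipschitz constant `L(f)` of `f` on the triangle on `v`,
`sup {dist (f x) (f y) / dist x y : x ≠ y}`, as a value in `ℝ≥0∞`. -/
def lipConst (v : Fin 3 → E2) (f : E2 → E2) : ℝ≥0∞ :=
  ⨆ x ∈ Tri v, ⨆ y ∈ Tri v, edist (f x) (f y) / edist x y

/-- `Λ(T,T')`: infimum of Lipschitz constants of label-preserving homeomorphisms. -/
def Lam (v v' : Fin 3 → E2) : ℝ≥0∞ :=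
  ⨅ (f : E2 → E2) (_ : IsLabelHomeo v v' f), lipConst v f

/-- `M(T,T')`: the max of the six ratios of edge lengths and altitude lengths. -/
def Mdist (v v' : Fin 3 → E2) : ℝ :=
  max (max (max (edgeLen v' 0 / edgeLen v 0) (edgeLen v' 1 / edgeLen v 1))
        (edgeLen v' 2 / edgeLen v 2))
      (max (max (altLen v' 0 / altLen v 0) (altLen v' 1 / altLen v 1))
        (altLen v' 2 / altLen v 2))


section InfDistLine
open EuclideanGeometry Real InnerProductGeometry
open scoped RealInnerProductSpace

lemma infDist_line (p a b : E2) (hab : a ≠ b) :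
    Metric.infDist p (affineSpan ℝ ({a, b} : Set E2) : Set E2)
      = dist p a * Real.sin (EuclideanGeometry.angle p a b) := by
  have hx : b - a ≠ 0 := sub_ne_zero.mpr (Ne.symm hab)
  set x : E2 := b - a with hxdef
  set u : E2 := p - a with hudef
  have hxn : (0:ℝ) < ‖x‖ := norm_pos_iff.mpr hx
  set t : ℝ := ⟪u, x⟫ / (‖x‖ ^ 2) with htdef
  set w : E2 := u - t • x with hwdef
  have hxx : ⟪x, x⟫ = ‖x‖ ^ 2 := real_inner_self_eq_norm_sq x
  have hwx : ⟪w, x⟫ = 0 := by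
    rw [hwdef, inner_sub_left, real_inner_smul_left, htdef, hxx]
    field_simp
    ring
  have hww : ‖w‖ ^ 2 = ⟪u, u⟫ - t * ⟪u, x⟫ := by
    rw [← real_inner_self_eq_norm_sq]
    simp only [hwdef, inner_sub_left, inner_sub_right, real_inner_smul_left,
      real_inner_smul_right, real_inner_comm x u, hxx, htdef]
    field_simp
    ring
  have hkey : ‖w‖ ^ 2 * ‖x‖ ^ 2 = ⟪u, u⟫ * ⟪x, x⟫ - ⟪u, x⟫ * ⟪u, x⟫ := by
    rw [hww, hxx, htdef]; field_simp
  have hang : EuclideanGeometry.angle p a b = InnerProductGeometry.angle u x := by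
    rw [EuclideanGeometry.angle, vsub_eq_sub, vsub_eq_sub]
  have hsin : Real.sin (InnerProductGeometry.angle u x) * ‖u‖ = ‖w‖ := by
    have h1 := InnerProductGeometry.sin_angle_mul_norm_mul_norm u x
    have h2 : Real.sqrt (⟪u, u⟫ * ⟪x, x⟫ - ⟪u, x⟫ * ⟪u, x⟫) = ‖w‖ * ‖x‖ := by
      rw [← hkey, show ‖w‖^2 * ‖x‖^2 = (‖w‖ * ‖x‖)^2 by ring]
      exact Real.sqrt_sq (by positivity)
    have h3 : (Real.sin (InnerProductGeometry.angle u x) * ‖u‖) * ‖x‖ = ‖w‖ * ‖x‖ := by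
      rw [mul_assoc]; exact h1.trans h2
    exact mul_right_cancel₀ hxn.ne' h3
  have hne : (affineSpan ℝ ({a, b} : Set E2) : Set E2).Nonempty :=
    ⟨a, by simpa using left_mem_affineSpan_pair ℝ a b⟩
  have hub : Metric.infDist p (affineSpan ℝ ({a, b} : Set E2) : Set E2) ≤ ‖w‖ := by
    have hmem : t • x +ᵥ a ∈ (affineSpan ℝ ({a, b} : Set E2) : Set E2) := by
      simpa [hxdef] using smul_vsub_vadd_mem_affineSpan_pair t a b
    have hd : dist p (t • x +ᵥ a) = ‖w‖ := by
      rw [dist_eq_norm, hwdef, hudef]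
      congr 1
      simp [vadd_eq_add]
      abel
    exact (Metric.infDist_le_dist_of_mem hmem).trans hd.le
  have hlb : ‖w‖ ≤ Metric.infDist p (affineSpan ℝ ({a, b} : Set E2) : Set E2) := by
    rw [Metric.infDist_eq_iInf]
    haveI : Nonempty ((affineSpan ℝ ({a, b} : Set E2) : Set E2)) := hne.to_subtype
    apply le_ciInf
    rintro ⟨q, hq⟩
    have hq' : (q -ᵥ a) +ᵥ a ∈ affineSpan ℝ ({a, b} : Set E2) := by simpa using hq
    obtain ⟨r, hr⟩ := vadd_left_mem_affineSpan_pair.mp hq'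
    have hqa : q - a = r • x := by
      rw [hxdef, ← vsub_eq_sub, ← vsub_eq_sub]
      exact hr.symm
    have hd : dist p q = ‖w + (t - r) • x‖ := by
      rw [dist_eq_norm, hwdef, hudef, sub_smul]
      congr 1
      have hpq : p - q = (p - a) - (q - a) := by abel
      rw [hpq, hqa]
      abel
    have h0 : ⟪w, (t - r) • x⟫ = 0 := by rw [real_inner_smul_right, hwx, mul_zero]
    have hsq : ‖w‖ ^ 2 ≤ ‖w + (t - r) • x‖ ^ 2 := by
      rw [norm_add_sq_real, h0]
      nlinarith [sq_nonneg ‖(t - r) • x‖]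
    have := Real.sqrt_le_sqrt hsq
    rw [Real.sqrt_sq (norm_nonneg _), Real.sqrt_sq (norm_nonneg _)] at this
    simpa [hd] using this
  have : Metric.infDist p (affineSpan ℝ ({a, b} : Set E2) : Set E2) = ‖w‖ :=
    le_antisymm hub hlb
  rw [this, hang, dist_eq_norm, ← hsin, ← hudef]
  ring

end InfDistLine

section Aux
open EuclideanGeometry Real

lemma f11 : ∀ i : Fin 3, i + 1 + 1 = i + 2 := by decide
lemma f12 : ∀ i : Fin 3, i + 1 + 2 = i := by decide
lemma f21 : ∀ i : Fin 3, i + 2 + 1 = i := by decide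
lemma f22 : ∀ i : Fin 3, i + 2 + 2 = i + 1 := by decide
lemma fne1 : ∀ i : Fin 3, i + 1 ≠ i + 2 := by decide
lemma fne2 : ∀ i : Fin 3, i + 1 ≠ i := by decide
lemma fne3 : ∀ i : Fin 3, i ≠ i + 2 := by decide
lemma fcases : ∀ i m : Fin 3, m = i ∨ m = i + 1 ∨ m = i + 2 := by decide
lemma ftriple : ∀ i : Fin 3, i = 0 ∨ i = 1 ∨ i = 2 := by decide

lemma edge_pos (v : Fin 3 → E2) (hv : AffineIndependent ℝ v) (i : Fin 3) :
    0 < edgeLen v i :=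
  dist_pos.mpr (hv.injective.ne (fne1 i))

lemma ang_mem (v : Fin 3 → E2) (hv : AffineIndependent ℝ v) (i : Fin 3) :
    0 < ang v i ∧ ang v i < π := by
  have hcol : ¬ Collinear ℝ ({v (i + 1), v i, v (i + 2)} : Set E2) :=
    (affineIndependent_iff_not_collinear_of_ne (fne2 i) (fne1 i) (fne3 i)).mp hv
  rw [EuclideanGeometry.collinear_iff_eq_or_eq_or_angle_eq_zero_or_angle_eq_pi] at hcol
  push_neg at hcol
  obtain ⟨-, -, h0, hpi⟩ := hcol
  exact ⟨lt_of_le_of_ne (EuclideanGeometry.angle_nonneg _ _ _) (Ne.symm h0),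
    lt_of_le_of_ne (EuclideanGeometry.angle_le_pi _ _ _) hpi⟩

lemma sin_ang_pos (v : Fin 3 → E2) (hv : AffineIndependent ℝ v) (i : Fin 3) :
    0 < Real.sin (ang v i) :=
  Real.sin_pos_of_pos_of_lt_pi (ang_mem v hv i).1 (ang_mem v hv i).2

lemma alt_eq (v : Fin 3 → E2) (hv : AffineIndependent ℝ v) (i : Fin 3) :
    altLen v i = edgeLen v (i + 2) * Real.sin (ang v (i + 1)) := by
  have hne : v (i + 1) ≠ v (i + 2) := hv.injective.ne (fne1 i)
  unfold altLen edgeLen ang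
  rw [infDist_line _ _ _ hne, f21, f22, f11, f12, EuclideanGeometry.angle_comm]

lemma alt_eq' (v : Fin 3 → E2) (hv : AffineIndependent ℝ v) (i : Fin 3) :
    altLen v i = edgeLen v (i + 1) * Real.sin (ang v (i + 2)) := by
  have hne : v (i + 2) ≠ v (i + 1) := hv.injective.ne (fne1 i).symm
  unfold altLen edgeLen ang
  rw [Set.pair_comm, infDist_line _ _ _ hne, f11, f12, f21, f22, dist_comm]

lemma alt_pos (v : Fin 3 → E2) (hv : AffineIndependent ℝ v) (i : Fin 3) :
    0 < altLen v i := by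
  rw [alt_eq v hv i]
  exact mul_pos (edge_pos v hv _) (sin_ang_pos v hv _)

lemma area_cyc (v : Fin 3 → E2) (hv : AffineIndependent ℝ v) (i : Fin 3) :
    edgeLen v (i + 1) * altLen v (i + 1) = edgeLen v i * altLen v i := by
  rw [alt_eq v hv (i + 1), alt_eq' v hv i, f12, f11]
  ring

lemma twoArea (v : Fin 3 → E2) (hv : AffineIndependent ℝ v) (m : Fin 3) :
    edgeLen v m * altLen v m = triArea v * 2 := by
  have h0 := area_cyc v hv 0
  have h1 := area_cyc v hv 1
  have e1 : (0 : Fin 3) + 1 = 1 := by decide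
  have e2 : (1 : Fin 3) + 1 = 2 := by decide
  rw [e1] at h0; rw [e2] at h1
  unfold triArea
  rcases ftriple m with rfl | rfl | rfl <;> linarith

lemma ang_sum (v : Fin 3 → E2) (hv : AffineIndependent ℝ v) (i : Fin 3) :
    ang v i + ang v (i + 1) + ang v (i + 2) = π := by
  have h2 : v i ≠ v (i + 1) := hv.injective.ne (fne2 i).symm
  have h3 : v (i + 2) ≠ v (i + 1) := hv.injective.ne (fne1 i).symm
  have := EuclideanGeometry.angle_add_angle_add_angle_eq_pi
    (p₁ := v (i + 1)) (p₂ := v i) (v (i + 2)) h2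
  have e1 : ∠ (v i) (v (i + 2)) (v (i + 1)) = ang v (i + 2) := by
    unfold ang; rw [f21, f22]
  have e2 : ∠ (v (i + 2)) (v (i + 1)) (v i) = ang v (i + 1) := by
    unfold ang; rw [f11, f12]
  rw [e1, e2] at this
  unfold ang
  rw [f11, f12, f21, f22]
  linarith [this]

end Aux

section Core
open Real

lemma core {a1 a2 a3 b1 b2 b3 s1 s2 s3 t1 t2 t3 : ℝ}
    (ha1 : 0 < a1) (ha2 : 0 < a2) (ha3 : 0 < a3)
    (hb1 : 0 < b1) (hb2 : 0 < b2) (hb3 : 0 < b3)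
    (hs1 : 0 < s1) (hs2 : 0 < s2) (hs3 : 0 < s3)
    (ht1 : 0 < t1) (ht2 : 0 < t2) (ht3 : 0 < t3)
    (hA2 : a1 * (a2 * s3) = b1 * (b2 * t3))
    (hA3 : a1 * (a3 * s2) = b1 * (b3 * t2))
    (hL2 : a1 * s2 = a2 * s1) (hL3 : a1 * s3 = a3 * s1)
    (hM2 : b1 * t2 = b2 * t1) (hM3 : b1 * t3 = b3 * t1)
    (h2 : s2 ≤ t2) (h3 : s3 ≤ t3) (h1 : t1 ≤ s1) :
    b1 * b2 ≤ a1 * a2 ∧ b1 * b3 ≤ a1 * a3 ∧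
    b1 * a2 ≤ a1 * b2 ∧ b1 * a3 ≤ a1 * b3 ∧ b1 ≤ a1 := by
  have P2 : b1 * b2 ≤ a1 * a2 := by
    nlinarith [mul_pos ha1 ha2, ht3, hA2]
  have P3 : b1 * b3 ≤ a1 * a3 := by
    nlinarith [mul_pos ha1 ha3, ht2, hA3]
  have C2 : b1 * a2 ≤ a1 * b2 := by
    have k1 : b1 * a2 * (s1 * t1) = a1 * b1 * (s2 * t1) := by
      linear_combination (-(b1 * t1)) * hL2
    have k2 : a1 * b2 * (s1 * t1) = a1 * b1 * (t2 * s1) := by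
      linear_combination (-(a1 * s1)) * hM2
    have k3 : a1 * b1 * (s2 * t1) ≤ a1 * b1 * (t2 * s1) := by
      nlinarith [mul_pos ha1 hb1, mul_nonneg (sub_nonneg.2 h2) ht1.le, mul_nonneg (sub_nonneg.2 h1) ht2.le]
    have := k1.trans_le (k3.trans_eq k2.symm)
    exact le_of_mul_le_mul_right this (mul_pos hs1 ht1)
  have C3 : b1 * a3 ≤ a1 * b3 := by
    have k1 : b1 * a3 * (s1 * t1) = a1 * b1 * (s3 * t1) := by
      linear_combination (-(b1 * t1)) * hL3
    have k2 : a1 * b3 * (s1 * t1) = a1 * b1 * (t3 * s1) := by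
      linear_combination (-(a1 * s1)) * hM3
    have k3 : a1 * b1 * (s3 * t1) ≤ a1 * b1 * (t3 * s1) := by
      nlinarith [mul_pos ha1 hb1, mul_nonneg (sub_nonneg.2 h3) ht1.le, mul_nonneg (sub_nonneg.2 h1) ht3.le]
    have := k1.trans_le (k3.trans_eq k2.symm)
    exact le_of_mul_le_mul_right this (mul_pos hs1 ht1)
  have hB : b1 ≤ a1 := by
    have hmm := mul_le_mul P2 C2 (by positivity) (by positivity)
    nlinarith [hmm, mul_pos ha2 hb2, ha1, hb1]
  exact ⟨P2, P3, C2, C3, hB⟩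

end Core

section Aux2
open EuclideanGeometry Real

lemma altRatio (v v' : Fin 3 → E2) (hv : AffineIndependent ℝ v) (hv' : AffineIndependent ℝ v')
    (harea : triArea v = triArea v') (m : Fin 3) :
    altLen v' m / altLen v m = edgeLen v m / edgeLen v' m := by
  have h : edgeLen v m * altLen v m = edgeLen v' m * altLen v' m := by
    rw [twoArea v hv m, twoArea v' hv' m, harea]
  rw [div_eq_div_iff (alt_pos v hv m).ne' (edge_pos v' hv' m).ne']
  linear_combination -h

lemma edge_ratio_le_Mdist (v v' : Fin 3 → E2) (i : Fin 3) :
    edgeLen v' i / edgeLen v i ≤ Mdist v v' := by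
  unfold Mdist
  rcases ftriple i with rfl | rfl | rfl <;> simp [le_max_iff, le_refl]

lemma alt_ratio_le_Mdist (v v' : Fin 3 → E2) (i : Fin 3) :
    altLen v' i / altLen v i ≤ Mdist v v' := by
  unfold Mdist
  rcases ftriple i with rfl | rfl | rfl <;> simp [le_max_iff, le_refl]

lemma Mdist_symm (v v' : Fin 3 → E2) (hv : AffineIndependent ℝ v)
    (hv' : AffineIndependent ℝ v') (harea : triArea v = triArea v') :
    Mdist v v' = Mdist v' v := by
  have h1 := fun m => altRatio v v' hv hv' harea m
  have h2 := fun m => altRatio v' v hv' hv harea.symm m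
  unfold Mdist
  rw [h1 0, h1 1, h1 2, h2 0, h2 1, h2 2]
  exact max_comm _ _

lemma key (v v' : Fin 3 → E2)
    (hv : AffineIndependent ℝ v) (hv' : AffineIndependent ℝ v')
    (hT : IsNonObtuse v) (hT' : IsNonObtuse v')
    (harea : triArea v = triArea v') (i : Fin 3)
    (h1 : ang v (i + 1) ≤ ang v' (i + 1)) (h2 : ang v (i + 2) ≤ ang v' (i + 2)) :
    Mdist v v' = edgeLen v i / edgeLen v' i := by
  have hs2 : Real.sin (ang v (i + 1)) ≤ Real.sin (ang v' (i + 1)) :=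
    Real.sin_le_sin_of_le_of_le_pi_div_two
      (by linarith [(ang_mem v hv (i + 1)).1, Real.pi_pos]) (hT' (i + 1)) h1
  have hs3 : Real.sin (ang v (i + 2)) ≤ Real.sin (ang v' (i + 2)) :=
    Real.sin_le_sin_of_le_of_le_pi_div_two
      (by linarith [(ang_mem v hv (i + 2)).1, Real.pi_pos]) (hT' (i + 2)) h2
  have hii : ang v' i ≤ ang v i := by
    have hA := ang_sum v hv i; have hB := ang_sum v' hv' i; linarith
  have hs1 : Real.sin (ang v' i) ≤ Real.sin (ang v i) :=
    Real.sin_le_sin_of_le_of_le_pi_div_two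
      (by linarith [(ang_mem v' hv' i).1, Real.pi_pos]) (hT i) hii
  have hL2 : edgeLen v i * Real.sin (ang v (i + 1))
      = edgeLen v (i + 1) * Real.sin (ang v i) := by
    have h := (alt_eq v hv (i + 2)).symm.trans (alt_eq' v hv (i + 2))
    rw [f22, f21] at h
    exact h.symm
  have hL3 : edgeLen v i * Real.sin (ang v (i + 2))
      = edgeLen v (i + 2) * Real.sin (ang v i) := by
    have h := (alt_eq v hv (i + 1)).symm.trans (alt_eq' v hv (i + 1))
    rw [f12, f11] at h
    exact h
  have hM2 : edgeLen v' i * Real.sin (ang v' (i + 1))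
      = edgeLen v' (i + 1) * Real.sin (ang v' i) := by
    have h := (alt_eq v' hv' (i + 2)).symm.trans (alt_eq' v' hv' (i + 2))
    rw [f22, f21] at h
    exact h.symm
  have hM3 : edgeLen v' i * Real.sin (ang v' (i + 2))
      = edgeLen v' (i + 2) * Real.sin (ang v' i) := by
    have h := (alt_eq v' hv' (i + 1)).symm.trans (alt_eq' v' hv' (i + 1))
    rw [f12, f11] at h
    exact h
  have harea' : edgeLen v i * altLen v i = edgeLen v' i * altLen v' i := by
    rw [twoArea v hv i, twoArea v' hv' i, harea]
  have hA2 : edgeLen v i * (edgeLen v (i + 1) * Real.sin (ang v (i + 2)))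
      = edgeLen v' i * (edgeLen v' (i + 1) * Real.sin (ang v' (i + 2))) := by
    have h := harea'
    rw [alt_eq' v hv i, alt_eq' v' hv' i] at h
    exact h
  have hA3 : edgeLen v i * (edgeLen v (i + 2) * Real.sin (ang v (i + 1)))
      = edgeLen v' i * (edgeLen v' (i + 2) * Real.sin (ang v' (i + 1))) := by
    have h := harea'
    rw [alt_eq v hv i, alt_eq v' hv' i] at h
    exact h
  obtain ⟨P2, P3, C2, C3, hB⟩ := core
    (edge_pos v hv i) (edge_pos v hv (i + 1)) (edge_pos v hv (i + 2))
    (edge_pos v' hv' i) (edge_pos v' hv' (i + 1)) (edge_pos v' hv' (i + 2))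
    (sin_ang_pos v hv i) (sin_ang_pos v hv (i + 1)) (sin_ang_pos v hv (i + 2))
    (sin_ang_pos v' hv' i) (sin_ang_pos v' hv' (i + 1)) (sin_ang_pos v' hv' (i + 2))
    hA2 hA3 hL2 hL3 hM2 hM3 hs2 hs3 hs1
  have hbound : ∀ m : Fin 3, edgeLen v' m / edgeLen v m ≤ edgeLen v i / edgeLen v' i ∧
      edgeLen v m / edgeLen v' m ≤ edgeLen v i / edgeLen v' i := by
    intro m
    rcases fcases i m with rfl | rfl | rfl
    · constructor
      · rw [div_le_div_iff₀ (edge_pos v hv m) (edge_pos v' hv' m)]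
        nlinarith [hB, edge_pos v' hv' m, edge_pos v hv m]
      · exact le_refl _
    · constructor
      · rw [div_le_div_iff₀ (edge_pos v hv _) (edge_pos v' hv' _)]
        nlinarith [P2]
      · rw [div_le_div_iff₀ (edge_pos v' hv' _) (edge_pos v' hv' i)]
        nlinarith [C2]
    · constructor
      · rw [div_le_div_iff₀ (edge_pos v hv _) (edge_pos v' hv' _)]
        nlinarith [P3]
      · rw [div_le_div_iff₀ (edge_pos v' hv' _) (edge_pos v' hv' i)]
        nlinarith [C3]
  have hMle : Mdist v v' ≤ edgeLen v i / edgeLen v' i := by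
    have har := fun m => altRatio v v' hv hv' harea m
    unfold Mdist
    rw [har 0, har 1, har 2]
    simp only [max_le_iff]
    exact ⟨⟨⟨(hbound 0).1, (hbound 1).1⟩, (hbound 2).1⟩,
      ⟨⟨(hbound 0).2, (hbound 1).2⟩, (hbound 2).2⟩⟩
  have hMge : edgeLen v i / edgeLen v' i ≤ Mdist v v' := by
    rw [← altRatio v v' hv hv' harea i]
    exact alt_ratio_le_Mdist v v' i
  exact le_antisymm hMle hMge

end Aux2

theorem stmt13 (v v' : Fin 3 → E2)
    (hv : AffineIndependent ℝ v) (hv' : AffineIndependent ℝ v')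
    (hT : IsNonObtuse v) (hT' : IsNonObtuse v')
    (harea : triArea v = triArea v')
    (i j k : Fin 3) (hij : i ≠ j) (hjk : j ≠ k) (hik : i ≠ k) :
    ((ang v j ≤ ang v' j ∧ ang v k ≤ ang v' k) →
      Mdist v v' = edgeLen v i / edgeLen v' i) ∧
    ((ang v' j ≤ ang v j ∧ ang v' k ≤ ang v k) →
      Mdist v v' = edgeLen v' i / edgeLen v i) ∧
    (((ang v j ≤ ang v' j ∧ ang v k ≤ ang v' k) ∨
        (ang v' j ≤ ang v j ∧ ang v' k ≤ ang v k)) →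
      Mdist v v' = max (edgeLen v i / edgeLen v' i) (edgeLen v' i / edgeLen v i) ∧
      Real.log (Mdist v v') = |Real.log (edgeLen v' i) - Real.log (edgeLen v i)|) := by
  have hcase : (j = i + 1 ∧ k = i + 2) ∨ (j = i + 2 ∧ k = i + 1) := by
    have h : ∀ i j k : Fin 3, i ≠ j → j ≠ k → i ≠ k →
        (j = i + 1 ∧ k = i + 2) ∨ (j = i + 2 ∧ k = i + 1) := by decide
    exact h i j k hij hjk hik
  have part1 : (ang v j ≤ ang v' j ∧ ang v k ≤ ang v' k) →
      Mdist v v' = edgeLen v i / edgeLen v' i := by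
    rintro ⟨ha, hb⟩
    rcases hcase with ⟨rfl, rfl⟩ | ⟨rfl, rfl⟩
    · exact key v v' hv hv' hT hT' harea i ha hb
    · exact key v v' hv hv' hT hT' harea i hb ha
  have part2 : (ang v' j ≤ ang v j ∧ ang v' k ≤ ang v k) →
      Mdist v v' = edgeLen v' i / edgeLen v i := by
    rintro ⟨ha, hb⟩
    rw [Mdist_symm v v' hv hv' harea]
    rcases hcase with ⟨rfl, rfl⟩ | ⟨rfl, rfl⟩
    · exact key v' v hv' hv hT' hT harea.symm i ha hb
    · exact key v' v hv' hv hT' hT harea.symm i hb ha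
  have he : 0 < edgeLen v i := edge_pos v hv i
  have he' : 0 < edgeLen v' i := edge_pos v' hv' i
  refine ⟨part1, part2, ?_⟩
  rintro (hc | hc)
  · have hM := part1 hc
    have hle : edgeLen v' i / edgeLen v i ≤ edgeLen v i / edgeLen v' i := by
      rw [← hM]; exact edge_ratio_le_Mdist v v' i
    have hba : edgeLen v' i ≤ edgeLen v i := by
      rw [div_le_div_iff₀ he he'] at hle
      nlinarith
    have hlog : Real.log (edgeLen v' i) ≤ Real.log (edgeLen v i) :=
      Real.log_le_log he' hba
    constructor
    · rw [hM, max_eq_left hle]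
    · rw [hM, Real.log_div he.ne' he'.ne', abs_of_nonpos (by linarith)]
      ring
  · have hM := part2 hc
    have hle : edgeLen v i / edgeLen v' i ≤ edgeLen v' i / edgeLen v i := by
      rw [← hM, ← altRatio v v' hv hv' harea i]
      exact alt_ratio_le_Mdist v v' i
    have hba : edgeLen v i ≤ edgeLen v' i := by
      rw [div_le_div_iff₀ he' he] at hle
      nlinarith
    have hlog : Real.log (edgeLen v i) ≤ Real.log (edgeLen v' i) :=
      Real.log_le_log he hba
    constructor
    · rw [hM, max_eq_right hle]
    · rw [hM, Real.log_div he'.ne' he.ne', abs_of_nonneg (by linarith)]
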